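/- arXiv:1105.3494 — 3 statements merged into one kernel-verified Lean document; each statement's English description precedes it below -/
import Mathlib

section
/- If (g(t), f(t), h(t)) satisfies the linearized Ricci flow on a steady gradient Ricci soliton, then the linear trace Harnack quantity Z(h, -∇f) = div(div h) + ⟨Ric, h⟩ - 2 div(h)(∇f) + h(∇f, ∇f) satisfies the heat equation (∂/∂t - Δ) Z = 0. -/
/-!
On a steady gradient soliton every factor in the Chow–Hamilton evolution formula for `Z(h, X)`
vanishes at `X = -∇f`: `∇X + Ric = 0` is the soliton equation, `(∂/∂t - Δ)X + Ric(X) = 0`, and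
the Harnack quadratic `M + 2 P(X) + Rm(X, X)` is zero because `P(X) = -M` and `Rm(X, X) = M`.
-/

open Finset in
theorem harnack_quadratic_neg_eq_zero {ι R : Type*} [Fintype ι] [CommRing R]
    (Rm : ι → ι → ι → ι → R) (P : ι → ι → ι → R) (Mt : ι → ι → R) (gradf : ι → R) (p q : ι)
    (hM : Mt p q = ∑ i, P i p q * gradf i) (hP : ∀ i, P i p q = ∑ j, Rm p i j q * gradf j) :
    Mt p q + 2 * ∑ i, P i p q * -gradf i + ∑ i, ∑ j, Rm p i j q * -gradf i * -gradf j = 0 := by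
  have hlinear : ∑ i, P i p q * -gradf i = -Mt p q := by
    simp only [mul_neg, sum_neg_distrib, hM]
  have hquadratic : ∑ i, ∑ j, Rm p i j q * -gradf i * -gradf j = Mt p q := by
    rw [hM]
    refine sum_congr rfl fun i _ => ?_
    rw [hP, sum_mul]
    exact sum_congr rfl fun j _ => by ring
  rw [hlinear, hquadratic]
  ring

open Finset in
/-- If (g(t), f(t), h(t)) satisfies the linearized Ricci flow on a steady
gradient Ricci soliton, then Z(h, -∇f) satisfies the heat equation ∂Z/∂t = ΔZ.
Pointwise model at a point (in an orthonormal frame, indices in `Fin n`):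
`Rc` is the Ricci tensor, `Rm p i j q` the curvature tensor R_{pijq},
`P i p q = ∇_i R_{pq} - ∇_p R_{qi}`, `Mt` the matrix Harnack M_{pq},
`gradf` = ∇f, `Hessf j i` = ∇_j∇^i f, `heatGradf j` = ((∂/∂t - Δ)∇f)^j,
`h` the solution of the linearized flow, `divh` = div(h), `Dterm j i` = ∇^j(div(h)_i + h_{ik}X^k),
`dtZ`, `lapZ` the time derivative and Laplacian of Z(h, -∇f), and X = -∇f.
We assume the Chow–Hamilton evolution formula (1) for Z(h,X) with X = -∇f, together
with the steady soliton identities M_{pq} = P_{ipq}∇^i f, P_{ipq} = R_{pijq}∇^j f,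
∇_j∇^i f + R_j^i = 0 and ((∂/∂t - Δ)∇f)^j = R_k^j ∇^k f.
Conclusion: ∂Z/∂t = ΔZ. -/
theorem stmt2_linear_trace_harnack_heat_equation
    (n : ℕ)
    (Rc : Fin n → Fin n → ℝ)
    (Rm : Fin n → Fin n → Fin n → Fin n → ℝ)
    (P : Fin n → Fin n → Fin n → ℝ)
    (Mt : Fin n → Fin n → ℝ)
    (gradf : Fin n → ℝ)
    (Hessf : Fin n → Fin n → ℝ)
    (heatGradf : Fin n → ℝ)
    (h : Fin n → Fin n → ℝ)
    (divh : Fin n → ℝ)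
    (Dterm : Fin n → Fin n → ℝ)
    (dtZ lapZ : ℝ)
    (X : Fin n → ℝ)
    (hX : X = fun i => -gradf i)
    -- steady soliton identities
    (hM : ∀ p q, Mt p q = ∑ i, P i p q * gradf i)
    (hP : ∀ i p q, P i p q = ∑ j, Rm p i j q * gradf j)
    (hHess : ∀ j i, Hessf j i + Rc j i = 0)
    (hheat : ∀ j, heatGradf j = ∑ k, Rc j k * gradf k)
    -- the Chow–Hamilton evolution formula (1) for Z(h, X) with X = -∇f,
    -- where ∇_j X^i = -Hessf j i and ((∂/∂t - Δ)X)^j = -heatGradf j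
    (hEvol : dtZ - lapZ =
      2 * ∑ p, ∑ q, h p q *
          (Mt p q + 2 * ∑ i, P i p q * X i + ∑ i, ∑ j, Rm p i j q * X i * X j)
      - 4 * ∑ j, ∑ i, ((-Hessf j i) - Rc j i) * Dterm j i
      + 2 * ∑ j, (divh j + ∑ i, h i j * X i) * ((-heatGradf j) - ∑ k, Rc j k * X k)
      + 2 * ∑ i, ∑ j, h i j *
          ∑ p, ((-Hessf p i) - Rc p i) * ((-Hessf p j) - Rc p j)) :
    dtZ = lapZ := by
  subst hX
  have hHarnack (p q : Fin n) :=
    harnack_quadratic_neg_eq_zero Rm P Mt gradf p q (hM p q) (hP · p q)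
  have hHeat (j : Fin n) : -heatGradf j - ∑ k, Rc j k * -gradf k = 0 := by
    simp only [mul_neg, sum_neg_distrib, sub_neg_eq_add, hheat, neg_add_cancel]
  have hSoliton (j i : Fin n) : -Hessf j i - Rc j i = 0 := by
    rw [← neg_add', hHess, neg_zero]
  rw [← sub_eq_zero, hEvol]
  simp only [hHarnack, hHeat, hSoliton, mul_zero, zero_mul, sum_const_zero, sub_zero, add_zero]
end

section
/- On a steady gradient Ricci soliton, if v = log u with ∂u/∂t = Δu + Ru and Q = Δv + R, then LQ = |∇∇v|² + ⟨Ric, ∇∇v⟩ + Ric(∇(v-f), ∇(v-f)), where L = ½(∂/∂t - Δ) - ∇v·∇. -/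
open RealInnerProductSpace

/-! Expanding `(∂/∂t - Δ)Q` by the two Bochner formulas and the evolution of `R`, the term
`⟨∇v, ∇Δv⟩` cancels against the drift, and the soliton identities `ΔR + 2|Ric|² = ⟨∇R, ∇f⟩` and
`2 Ric(∇f, ·) = ⟨∇R, ·⟩` turn the remaining `Ric(∇v, ∇v) - ⟨∇R, ∇v⟩ + ½⟨∇R, ∇f⟩` into
`Ric(∇(v - f), ∇(v - f))`. -/

section SymmetricBilinear

variable {V : Type*} [NormedAddCommGroup V] [InnerProductSpace ℝ V]

theorem LinearMap.apply_sub_sub_of_symm (B : V →ₗ[ℝ] V →ₗ[ℝ] ℝ) (hB : ∀ a b, B a b = B b a)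
    (x y : V) : B (x - y) (x - y) = B x x - 2 * B y x + B y y := by
  simp only [map_sub, LinearMap.sub_apply, hB x y]
  ring

theorem LinearMap.apply_sub_sub_of_two_mul_eq_inner (B : V →ₗ[ℝ] V →ₗ[ℝ] ℝ)
    (hB : ∀ a b, B a b = B b a) {x y z : V} (hy : ∀ w, 2 * B y w = ⟪z, w⟫) :
    B (x - y) (x - y) = B x x - ⟪z, x⟫ + ⟪z, y⟫ / 2 := by
  rw [B.apply_sub_sub_of_symm hB, hy x, ← hy y]
  ring

end SymmetricBilinear

theorem half_heat_Q_eq {dtLapv lapLapv dtR lapR lapGradvSq hessvSq ricHessv ricSq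
      gradvGradLapv ricGradv gradRGradf : ℝ}
    (ha : dtLapv - lapLapv = (lapGradvSq + lapR) + 2 * ricHessv)
    (hb : lapGradvSq = 2 * hessvSq + 2 * gradvGradLapv + 2 * ricGradv)
    (hc : dtR - lapR = 2 * ricSq)
    (hd : lapR + 2 * ricSq = gradRGradf) :
    (1 / 2) * ((dtLapv + dtR) - (lapLapv + lapR))
      = hessvSq + gradvGradLapv + ricGradv + ricHessv + gradRGradf / 2 := by
  linarith

/-- On a steady gradient Ricci soliton, with v = log u, Q = Δv + R and
L = ½(∂/∂t - Δ) - ∇v·∇, one has LQ = |∇∇v|² + ⟨Ric, ∇∇v⟩ + Ric(∇(v-f), ∇(v-f)).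
Pointwise model at a point: gradients live in an inner product space `V`,
`Ric : V →ₗ V →ₗ ℝ` is the Ricci bilinear form, `gradv, gradf, gradR, gradLapv : V` are
∇v, ∇f, ∇R, ∇Δv; scalars: `dtLapv` = ∂(Δv)/∂t, `lapLapv` = Δ(Δv), `dtR` = ∂R/∂t,
`lapR` = ΔR, `lapGradvSq` = Δ|∇v|², `hessvSq` = |∇∇v|², `ricHessv` = ⟨Ric, ∇∇v⟩,
`ricSq` = |Ric|². Assumed identities:
(a) (∂/∂t - Δ)Δv = Δ(|∇v|² + R) + 2⟨Ric, ∇∇v⟩ (Bochner under Ricci flow,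
    using ∂v/∂t - Δv = |∇v|² + R);
(b) Δ|∇v|² = 2|∇∇v|² + 2⟨∇v, ∇Δv⟩ + 2 Ric(∇v, ∇v) (Bochner);
(c) (∂/∂t - Δ)R = 2|Ric|²;
(d) ΔR + 2|Ric|² = ⟨∇R, ∇f⟩ (steady soliton);
(e) 2 Ric(∇f, ·) = ⟨∇R, ·⟩ (steady soliton).
Conclusion (formula (ElleQueue)):
½((∂/∂t - Δ)Q) - ⟨∇v, ∇Q⟩ = |∇∇v|² + ⟨Ric, ∇∇v⟩ + Ric(∇(v-f), ∇(v-f)),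
where Q = Δv + R, so ∇Q = ∇Δv + ∇R. -/
theorem stmt8_LQ_formula
    {V : Type*} [NormedAddCommGroup V] [InnerProductSpace ℝ V]
    (Ric : V →ₗ[ℝ] V →ₗ[ℝ] ℝ)
    (Ric_symm : ∀ a b : V, Ric a b = Ric b a)
    (gradv gradf gradR gradLapv : V)
    (dtLapv lapLapv dtR lapR lapGradvSq hessvSq ricHessv ricSq : ℝ)
    (ha : dtLapv - lapLapv = (lapGradvSq + lapR) + 2 * ricHessv)
    (hb : lapGradvSq = 2 * hessvSq + 2 * ⟪gradv, gradLapv⟫ + 2 * Ric gradv gradv)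
    (hc : dtR - lapR = 2 * ricSq)
    (hd : lapR + 2 * ricSq = ⟪gradR, gradf⟫)
    (he : ∀ w : V, 2 * Ric gradf w = ⟪gradR, w⟫) :
    (1 / 2) * ((dtLapv + dtR) - (lapLapv + lapR))
      - ⟪gradv, gradLapv + gradR⟫
    = hessvSq + ricHessv + Ric (gradv - gradf) (gradv - gradf) := by
  rw [half_heat_Q_eq ha hb hc hd, Ric.apply_sub_sub_of_two_mul_eq_inner Ric_symm he,
    inner_add_right, real_inner_comm gradv gradR]
  ring
end

section
/- On a steady gradient Ricci soliton, the Cao–Hamilton Harnack quantity P = 2Δv + |∇v|² + 3R satisfies LP = |∇∇v + Ric|² + 2 Ric(∇(v-f), ∇(v-f)), where L = ½(∂/∂t - Δ) - ∇v·∇. In particular if Ric ≥ 0 then LP ≥ (1/n)(Δv + R)² ≥ 0. -/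
/-!
Since `L` is linear, `LP = 2 LQ + L(|∇v|² + R)`, and inserting the two known identities the
`|∇∇v|²` terms combine with `2⟨Ric, ∇∇v⟩ + |Ric|²` into the square `|∇∇v + Ric|²`. For `Ric ≥ 0`
the term `Ric(∇(v-f), ∇(v-f))` is nonnegative, and Cauchy–Schwarz on the diagonal of
`∇∇v + Ric` gives `|∇∇v + Ric|² ≥ (tr (∇∇v + Ric))² / n = Q² / n`.
-/

open Finset

namespace Matrix

variable {ι R : Type*} [Fintype ι]

theorem sum_sum_add_sq [CommRing R] (A B : Matrix ι ι R) :
    ∑ i, ∑ j, ((A + B) i j) ^ 2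
      = ∑ i, ∑ j, (A i j) ^ 2 + 2 * ∑ i, ∑ j, B i j * A i j + ∑ i, ∑ j, (B i j) ^ 2 := by
  simp only [add_apply, mul_sum, ← sum_add_distrib]
  exact sum_congr rfl fun i _ => sum_congr rfl fun j _ => by ring

theorem PosSemidef.sum_sum_mul_mul_nonneg {B : Matrix ι ι ℝ} (hB : B.PosSemidef) (w : ι → ℝ) :
    0 ≤ ∑ i, ∑ j, B i j * w i * w j := by
  have h := hB.dotProduct_mulVec_nonneg w
  simp only [dotProduct, mulVec, star_trivial, mul_sum] at h
  exact h.trans_eq (sum_congr rfl fun i _ => sum_congr rfl fun j _ => by ring)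

theorem sum_diag_sq_le_sum_sum_sq [Ring R] [LinearOrder R] [IsStrictOrderedRing R]
    (M : Matrix ι ι R) : ∑ i, (M i i) ^ 2 ≤ ∑ i, ∑ j, (M i j) ^ 2 :=
  sum_le_sum fun i _ =>
    single_le_sum (f := fun j => (M i j) ^ 2) (fun _ _ => sq_nonneg _) (mem_univ i)

theorem one_div_card_mul_sq_sum_diag_le [Field R] [LinearOrder R] [IsStrictOrderedRing R]
    (M : Matrix ι ι R) :
    1 / (Fintype.card ι : R) * (∑ i, M i i) ^ 2 ≤ ∑ i, ∑ j, (M i j) ^ 2 := by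
  rw [one_div_mul_eq_div]
  refine div_le_of_le_mul₀ (Nat.cast_nonneg _)
    (sum_nonneg fun i _ => sum_nonneg fun j _ => sq_nonneg _) ?_
  calc (∑ i, M i i) ^ 2 ≤ Fintype.card ι * ∑ i, (M i i) ^ 2 := sq_sum_le_card_mul_sum_sq
    _ ≤ Fintype.card ι * ∑ i, ∑ j, (M i j) ^ 2 :=
      mul_le_mul_of_nonneg_left (sum_diag_sq_le_sum_sum_sq M) (Nat.cast_nonneg _)
    _ = (∑ i, ∑ j, (M i j) ^ 2) * Fintype.card ι := mul_comm _ _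

end Matrix

open Finset in
theorem stmt10_Cao_Hamilton_Harnack_general
    (n : ℕ)
    (A B : Matrix (Fin n) (Fin n) ℝ)
    (w : Fin n → ℝ)
    (lapv R LQ LG : ℝ)
    (hLQ : LQ = (∑ i, ∑ j, (A i j) ^ 2) + (∑ i, ∑ j, B i j * A i j)
      + ∑ i, ∑ j, B i j * w i * w j)
    (hLG : LG = (∑ i, ∑ j, (B i j) ^ 2) - ∑ i, ∑ j, (A i j) ^ 2)
    (htrace : ∑ i, (A + B) i i = lapv + R) :
    2 * LQ + LG
      = (∑ i, ∑ j, ((A + B) i j) ^ 2) + 2 * ∑ i, ∑ j, B i j * w i * w j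
    ∧ (B.PosSemidef →
        2 * LQ + LG ≥ (1 / n) * (lapv + R) ^ 2 ∧ (1 / n) * (lapv + R) ^ 2 ≥ 0) := by
  have harnack : 2 * LQ + LG
      = (∑ i, ∑ j, ((A + B) i j) ^ 2) + 2 * ∑ i, ∑ j, B i j * w i * w j := by
    rw [hLQ, hLG, Matrix.sum_sum_add_sq]
    ring
  refine ⟨harnack, fun hRic => ⟨?_, by positivity⟩⟩
  have hcs := (A + B).one_div_card_mul_sq_sum_diag_le
  rw [Fintype.card_fin, htrace] at hcs
  linarith [hRic.sum_sum_mul_mul_nonneg w]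

open Finset in
/-- On a steady gradient Ricci soliton the Cao–Hamilton Harnack quantity
P = 2Δv + |∇v|² + 3R = 2Q + (|∇v|² + R) satisfies
LP = |∇∇v + Ric|² + 2 Ric(∇(v-f), ∇(v-f)); if Ric ≥ 0 then LP ≥ (1/n)(Δv + R)² ≥ 0.
Pointwise model in an orthonormal frame: `A` = ∇∇v and `B` = Ric are symmetric n×n
matrices, `w` = ∇(v-f) is a vector, `lapv` = Δv and `R` the scalar curvature.
By linearity of L, LP = 2·LQ + L(|∇v|² + R); we assume the two previously established
identities LQ = |∇∇v|² + ⟨Ric, ∇∇v⟩ + Ric(∇(v-f), ∇(v-f)) and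
L(|∇v|² + R) = |Ric|² - |∇∇v|², and the trace identity tr(∇∇v + Ric) = Δv + R
(steady soliton: R = -Δf). -/
theorem stmt10_Cao_Hamilton_Harnack
    (n : ℕ) (hn : 0 < n)
    (A B : Matrix (Fin n) (Fin n) ℝ)
    (hA : A.IsSymm) (hB : B.IsSymm)
    (w : Fin n → ℝ)
    (lapv R LQ LG : ℝ)
    (hLQ : LQ = (∑ i, ∑ j, (A i j) ^ 2) + (∑ i, ∑ j, B i j * A i j)
      + ∑ i, ∑ j, B i j * w i * w j)
    (hLG : LG = (∑ i, ∑ j, (B i j) ^ 2) - ∑ i, ∑ j, (A i j) ^ 2)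
    (htrace : ∑ i, (A + B) i i = lapv + R) :
    2 * LQ + LG
      = (∑ i, ∑ j, ((A + B) i j) ^ 2) + 2 * ∑ i, ∑ j, B i j * w i * w j
    ∧ (B.PosSemidef →
        2 * LQ + LG ≥ (1 / n) * (lapv + R) ^ 2 ∧ (1 / n) * (lapv + R) ^ 2 ≥ 0) :=
  stmt10_Cao_Hamilton_Harnack_general n A B w lapv R LQ LG hLQ hLG htrace
end
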